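/- For any κ, κ' ∈ ℂ, the linear map T_κ^{κ'}(f) = Σ_{ℓ≥0} (1/ℓ!)((κ'-κ)/4)^ℓ ∂_ζ^{2ℓ} f on ℂ[ζ] satisfies T_κ^{κ'}(f *_κ g) = T_κ^{κ'}(f) *_{κ'} T_κ^{κ'}(g), i.e. it is an algebra isomorphism from (ℂ[ζ], *_κ) to (ℂ[ζ], *_{κ'}). -/

import Mathlib

open Polynomial Finset

/-- Iterated derivative on polynomials. -/
noncomputable def pderiv : ℕ → Polynomial ℂ → Polynomial ℂ :=
  fun ℓ => (fun p => Polynomial.derivative p)^[ℓ]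

/-- The commutative deformed product `f *_κ g = Σ_ℓ (1/ℓ!)(κ/2)^ℓ (∂^ℓ f)(∂^ℓ g)`;
the sum is finite on polynomials, all terms with `ℓ > natDegree f + natDegree g` vanish. -/
noncomputable def starK (κ : ℂ) (f g : Polynomial ℂ) : Polynomial ℂ :=
  ∑ ℓ ∈ Finset.range (f.natDegree + g.natDegree + 1),
    Polynomial.C ((κ / 2) ^ ℓ / (Nat.factorial ℓ : ℂ)) * pderiv ℓ f * pderiv ℓ g


/-- The intertwiner `T_κ^{κ'} = exp((κ'-κ)/4 ∂²)` on polynomials. -/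
noncomputable def TK (κ κ' : ℂ) (f : Polynomial ℂ) : Polynomial ℂ :=
  ∑ ℓ ∈ Finset.range (f.natDegree + 1),
    Polynomial.C (((κ' - κ) / 4) ^ ℓ / (Nat.factorial ℓ : ℂ)) * pderiv (2 * ℓ) f

/-!
Both sides are additive and `C`-linear in `f`, so by induction on `f` it suffices to treat
constants and the step `f ↦ f * X`. Three commutation rules drive that step: `∂` is a derivation
of `*_κ`, `(f X) *_κ g = (f *_κ g) X + (κ/2) f *_κ ∂g`, and `T (p X) = (T p) X + ((κ'-κ)/2) T (∂p)`
with `T` commuting with `∂`. Applied to `T (f X *_κ g)` they produce the shifts `(κ'-κ)/2` and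
`κ/2`, which add up to the shift `κ'/2` of `*_{κ'}`.
-/

lemma derivative_iterate_derivative {R : Type*} [Semiring R] (ℓ : ℕ) (p : R[X]) :
    derivative (derivative^[ℓ] p) = derivative^[ℓ] (derivative p) :=
  ((Function.Commute.iterate_self _ ℓ) p).symm

lemma natCast_add_one_mul_pow_div_factorial {K : Type*} [Field K] [CharZero K] (s : K) (k : ℕ) :
    ((k : K) + 1) * (s ^ (k + 1) / (k + 1).factorial) = s * (s ^ k / k.factorial) := by
  rw [Nat.factorial_succ, Nat.cast_mul, Nat.cast_succ]
  field_simp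
  ring

lemma iterate_derivative_succ_mul_X {R : Type*} [CommSemiring R] (k : ℕ) (p : R[X]) :
    derivative^[k + 1] (p * X) = derivative^[k + 1] p * X + C ((k : R) + 1) * derivative^[k] p := by
  rw [iterate_derivative_mul_X, nsmul_eq_mul, ← C_eq_natCast, Nat.cast_succ, Nat.add_sub_cancel]

lemma starK_eq_sum_range (κ : ℂ) {f : ℂ[X]} (g : ℂ[X]) {N : ℕ} (hN : f.natDegree < N) :
    starK κ f g = ∑ ℓ ∈ range N,
      C ((κ / 2) ^ ℓ / (ℓ.factorial : ℂ)) * derivative^[ℓ] f * derivative^[ℓ] g := by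
  have hvanish : ∀ ℓ ≥ f.natDegree + 1,
      C ((κ / 2) ^ ℓ / (ℓ.factorial : ℂ)) * derivative^[ℓ] f * derivative^[ℓ] g = 0 :=
    fun ℓ hℓ => by rw [iterate_derivative_eq_zero (by omega), mul_zero, zero_mul]
  exact (eventually_constant_sum hvanish (by omega)).trans (eventually_constant_sum hvanish hN).symm

lemma TK_eq_sum_range (κ κ' : ℂ) {f : ℂ[X]} {N : ℕ} (hN : f.natDegree < N) :
    TK κ κ' f = ∑ ℓ ∈ range N,
      C (((κ' - κ) / 4) ^ ℓ / (ℓ.factorial : ℂ)) * derivative^[2 * ℓ] f := by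
  have hvanish : ∀ ℓ ≥ f.natDegree + 1,
      C (((κ' - κ) / 4) ^ ℓ / (ℓ.factorial : ℂ)) * derivative^[2 * ℓ] f = 0 :=
    fun ℓ hℓ => by rw [iterate_derivative_eq_zero (by omega), mul_zero]
  exact (eventually_constant_sum hvanish le_rfl).trans (eventually_constant_sum hvanish hN).symm

lemma starK_add_left (κ : ℂ) (f₁ f₂ g : ℂ[X]) :
    starK κ (f₁ + f₂) g = starK κ f₁ g + starK κ f₂ g := by
  set N := max f₁.natDegree f₂.natDegree + 1
  rw [starK_eq_sum_range κ g ((natDegree_add_le f₁ f₂).trans_lt (by omega) : _ < N),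
    starK_eq_sum_range κ g (N := N) (by omega), starK_eq_sum_range κ g (N := N) (by omega),
    ← sum_add_distrib]
  simp only [iterate_map_add, mul_add, add_mul]

lemma starK_C_mul_left (κ c : ℂ) (f g : ℂ[X]) :
    starK κ (C c * f) g = C c * starK κ f g := by
  rw [starK_eq_sum_range κ g (N := f.natDegree + 1) ((natDegree_C_mul_le c f).trans_lt (by omega)),
    starK_eq_sum_range κ g (Nat.lt_succ_self _), mul_sum]
  refine sum_congr rfl fun ℓ _ => ?_
  rw [iterate_derivative_C_mul]
  ring

lemma starK_C_left (κ c : ℂ) (g : ℂ[X]) : starK κ (C c) g = C c * g := by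
  simp [starK_eq_sum_range κ g (f := C c) (N := 1) (by simp)]

lemma derivative_starK (κ : ℂ) (f g : ℂ[X]) :
    derivative (starK κ f g) = starK κ (derivative f) g + starK κ f (derivative g) := by
  have hN := Nat.lt_succ_self f.natDegree
  rw [starK_eq_sum_range κ g hN,
    starK_eq_sum_range κ g ((natDegree_derivative_le f).trans_lt (by omega : _ < f.natDegree + 1)),
    starK_eq_sum_range κ (derivative g) hN, map_sum, ← sum_add_distrib]
  simp only [derivative_mul, derivative_C, zero_mul, zero_add, derivative_iterate_derivative]

lemma TK_add (κ κ' : ℂ) (f₁ f₂ : ℂ[X]) :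
    TK κ κ' (f₁ + f₂) = TK κ κ' f₁ + TK κ κ' f₂ := by
  set N := max f₁.natDegree f₂.natDegree + 1
  rw [TK_eq_sum_range κ κ' ((natDegree_add_le f₁ f₂).trans_lt (by omega) : _ < N),
    TK_eq_sum_range κ κ' (N := N) (by omega), TK_eq_sum_range κ κ' (N := N) (by omega),
    ← sum_add_distrib]
  simp only [iterate_map_add, mul_add]

lemma TK_C_mul (κ κ' c : ℂ) (f : ℂ[X]) : TK κ κ' (C c * f) = C c * TK κ κ' f := by
  rw [TK_eq_sum_range κ κ' (N := f.natDegree + 1) ((natDegree_C_mul_le c f).trans_lt (by omega)),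
    TK_eq_sum_range κ κ' (Nat.lt_succ_self _), mul_sum]
  simp only [iterate_derivative_C_mul, mul_left_comm]

lemma TK_C (κ κ' c : ℂ) : TK κ κ' (C c) = C c := by
  simp [TK_eq_sum_range κ κ' (f := C c) (N := 1) (by simp)]

lemma TK_derivative (κ κ' : ℂ) (f : ℂ[X]) :
    TK κ κ' (derivative f) = derivative (TK κ κ' f) := by
  have hN := Nat.lt_succ_self f.natDegree
  rw [TK_eq_sum_range κ κ' hN,
    TK_eq_sum_range κ κ' ((natDegree_derivative_le f).trans_lt (by omega : _ < f.natDegree + 1)),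
    map_sum]
  simp only [derivative_C_mul, derivative_iterate_derivative]

lemma starK_mul_X_left (κ : ℂ) (f g : ℂ[X]) :
    starK κ (f * X) g = starK κ f g * X + C (κ / 2) * starK κ f (derivative g) := by
  set N := f.natDegree + 1
  have hterm : ∀ k : ℕ,
      C ((κ / 2) ^ (k + 1) / ((k + 1).factorial : ℂ)) * derivative^[k + 1] (f * X) *
          derivative^[k + 1] g =
        C ((κ / 2) ^ (k + 1) / ((k + 1).factorial : ℂ)) * derivative^[k + 1] f *
            derivative^[k + 1] g * X +
          C (κ / 2) * (C ((κ / 2) ^ k / (k.factorial : ℂ)) * derivative^[k] f *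
            derivative^[k] (derivative g)) := by
    intro k
    have hc := congrArg C (natCast_add_one_mul_pow_div_factorial (κ / 2) k)
    rw [C_mul, C_mul] at hc
    rw [iterate_derivative_succ_mul_X, ← Function.iterate_succ_apply]
    linear_combination (derivative^[k] f * derivative^[k + 1] g) * hc
  rw [starK_eq_sum_range κ g (N := N + 1) (natDegree_mul_le.trans_lt (by rw [natDegree_X]; omega)),
    starK_eq_sum_range κ g (N := N + 1) (by omega),
    starK_eq_sum_range κ (derivative g) (Nat.lt_succ_self _), sum_range_succ' _ N,
    sum_range_succ' _ N, sum_congr rfl fun k _ => hterm k, sum_add_distrib, ← sum_mul, ← mul_sum]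
  simp only [Function.iterate_zero_apply, pow_zero, Nat.factorial_zero, Nat.cast_one, div_one,
    C_1, one_mul]
  ring

lemma TK_mul_X (κ κ' : ℂ) (f : ℂ[X]) :
    TK κ κ' (f * X) = TK κ κ' f * X + C ((κ' - κ) / 2) * TK κ κ' (derivative f) := by
  set N := f.natDegree + 1
  have hterm : ∀ k : ℕ,
      C (((κ' - κ) / 4) ^ (k + 1) / ((k + 1).factorial : ℂ)) * derivative^[2 * (k + 1)] (f * X) =
        C (((κ' - κ) / 4) ^ (k + 1) / ((k + 1).factorial : ℂ)) * derivative^[2 * (k + 1)] f * X +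
          C ((κ' - κ) / 2) * (C (((κ' - κ) / 4) ^ k / (k.factorial : ℂ)) *
            derivative^[2 * k] (derivative f)) := by
    intro k
    have hc : ((2 * k + 1 : ℕ) + 1 : ℂ) * (((κ' - κ) / 4) ^ (k + 1) / ((k + 1).factorial : ℂ)) =
        (κ' - κ) / 2 * (((κ' - κ) / 4) ^ k / (k.factorial : ℂ)) := by
      push_cast
      linear_combination 2 * natCast_add_one_mul_pow_div_factorial ((κ' - κ) / 4) k
    replace hc := congrArg C hc
    rw [C_mul, C_mul] at hc
    rw [show 2 * (k + 1) = 2 * k + 1 + 1 by ring, iterate_derivative_succ_mul_X,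
      ← Function.iterate_succ_apply]
    linear_combination derivative^[2 * k + 1] f * hc
  rw [TK_eq_sum_range κ κ' (N := N + 1) (natDegree_mul_le.trans_lt (by rw [natDegree_X]; omega)),
    TK_eq_sum_range κ κ' (N := N + 1) (by omega),
    TK_eq_sum_range κ κ' ((natDegree_derivative_le f).trans_lt (by omega) : _ < N),
    sum_range_succ' _ N, sum_range_succ' _ N, sum_congr rfl fun k _ => hterm k, sum_add_distrib,
    ← sum_mul, ← mul_sum]
  simp only [Function.iterate_zero_apply, pow_zero, Nat.factorial_zero, Nat.cast_one, div_one,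
    C_1, one_mul, mul_zero]
  ring

theorem TK_intertwines (κ κ' : ℂ) (f g : Polynomial ℂ) :
    TK κ κ' (starK κ f g) = starK κ' (TK κ κ' f) (TK κ κ' g) := by
  induction f using Polynomial.induction_on generalizing g with
  | C c => rw [starK_C_left, TK_C_mul, TK_C, starK_C_left]
  | add p q hp hq => rw [starK_add_left, TK_add, hp, hq, TK_add, starK_add_left]
  | monomial n c ih =>
    have hκ : C ((κ' - κ) / 2) + C (κ / 2) = C (κ' / 2) := by rw [← C_add]; ring_nf
    rw [pow_succ, ← mul_assoc, starK_mul_X_left, TK_add, TK_C_mul, TK_mul_X, TK_derivative, ih,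
      derivative_starK, ← TK_derivative, ih, TK_mul_X, starK_add_left, starK_mul_X_left,
      starK_C_mul_left, TK_derivative, TK_derivative]
    linear_combination (starK κ' (TK κ κ' (C c * X ^ n)) (derivative (TK κ κ' g))) * hκ
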